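/- Let 0 < α < 1, λ ≥ 1, and let h : [a,b] → [0,∞) be continuous. If u : [a,b] → [0,∞) is continuous and satisfies u(t) ≤ (1/Γ(α)) ∫_a^t (t-s)^{α-1} h(s)·u(s)^λ ds for every t ∈ [a,b], then u(t) = 0 for every t ∈ [a,b]. Consequently, w(t,s) := h(t)·s^λ is a Kamke function of order α on [a,b]. -/

import Mathlib

open MeasureTheory Set intervalIntegral

/-- `w : [a,b] × [0,∞) → [0,∞)` is a Kamke function of order `α` on `[a,b]`. -/
def IsKamkeFunction (α a b : ℝ) (w : ℝ → ℝ → ℝ) : Prop :=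
  ContinuousOn (fun p : ℝ × ℝ => w p.1 p.2) (Set.Icc a b ×ˢ Set.Ici 0) ∧
  (∀ t ∈ Set.Icc a b, ∀ s : ℝ, 0 ≤ s → 0 ≤ w t s) ∧
  (∀ t ∈ Set.Icc a b, w t 0 = 0) ∧
  (∀ v : ℝ → ℝ, ContinuousOn v (Set.Icc a b) → (∀ t ∈ Set.Icc a b, 0 ≤ v t) →
    (∀ t ∈ Set.Icc a b,
      v t ≤ (Real.Gamma α)⁻¹ * ∫ s in a..t, ((t - s) ^ (α - 1) : ℝ) * w s (v s)) →
    Filter.Tendsto (fun t => v t / (t - a) ^ α) (nhdsWithin a (Set.Ioi a)) (nhds 0) →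
    ∀ t ∈ Set.Icc a b, v t = 0)

/-!
Since `u` and `h` are bounded on `[a,b]`, say by `K` and `H`, and `λ ≥ 1`, the superlinear term
`h(s) u(s)^λ` is at most `H K^(λ-1) u(s)`, so `u` satisfies a *linear* Volterra inequality
`u(t) ≤ C ∫_a^t (t-s)^(α-1) u(s) ds`. Such a `u` vanishes by a Gronwall-type continuation argument:
if `u = 0` on `[a,c]`, then on `[c,c+δ]` the maximum `M` of `u` satisfies `M ≤ C δ^α / α · M`,
so `M = 0` once `δ` is small enough, and `δ` does not depend on `c`.
-/

lemma intervalIntegrable_sub_rpow_sub_one {α : ℝ} (hα : 0 < α) (t p q : ℝ) :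
    IntervalIntegrable (fun s => (t - s) ^ (α - 1)) volume p q := by
  simpa using (intervalIntegral.intervalIntegrable_rpow' (a := t - p) (b := t - q)
    (show (-1 : ℝ) < α - 1 by linarith)).comp_sub_left t

lemma integral_sub_rpow_sub_one {α : ℝ} (hα : 0 < α) (c t : ℝ) :
    ∫ s in c..t, (t - s) ^ (α - 1) = (t - c) ^ α / α := by
  rw [intervalIntegral.integral_comp_sub_left (fun x => x ^ (α - 1)) t, sub_self,
    integral_rpow (Or.inl (by linarith)), sub_add_cancel, Real.zero_rpow hα.ne', sub_zero]

lemma intervalIntegrable_sub_rpow_sub_one_mul {α t p q : ℝ} {f : ℝ → ℝ} (hα : 0 < α)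
    (hf : ContinuousOn f (uIcc p q)) :
    IntervalIntegrable (fun s => (t - s) ^ (α - 1) * f s) volume p q :=
  (intervalIntegrable_sub_rpow_sub_one hα t p q).mul_continuousOn hf

lemma integral_sub_rpow_sub_one_mul_le {α a c t M : ℝ} {u : ℝ → ℝ} (hα : 0 < α)
    (hac : a ≤ c) (hct : c ≤ t) (hu : ContinuousOn u (Icc a t))
    (hzero : ∀ s ∈ Icc a c, u s = 0) (hM : ∀ s ∈ Icc c t, u s ≤ M) :
    ∫ s in a..t, (t - s) ^ (α - 1) * u s ≤ M * ((t - c) ^ α / α) := by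
  have hint_ac : IntervalIntegrable (fun s => (t - s) ^ (α - 1) * u s) volume a c :=
    intervalIntegrable_sub_rpow_sub_one_mul hα
      (hu.mono (by rw [uIcc_of_le hac]; exact Icc_subset_Icc_right hct))
  have hint_ct : IntervalIntegrable (fun s => (t - s) ^ (α - 1) * u s) volume c t :=
    intervalIntegrable_sub_rpow_sub_one_mul hα
      (hu.mono (by rw [uIcc_of_le hct]; exact Icc_subset_Icc_left hac))
  have hvanish : ∫ s in a..c, (t - s) ^ (α - 1) * u s = 0 := by
    rw [integral_congr (g := fun _ => 0) fun s hs => by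
      rw [hzero s (by rwa [uIcc_of_le hac] at hs), mul_zero], intervalIntegral.integral_zero]
  have hbound : ∫ s in c..t, (t - s) ^ (α - 1) * u s ≤ ∫ s in c..t, (t - s) ^ (α - 1) * M :=
    integral_mono_on hct hint_ct ((intervalIntegrable_sub_rpow_sub_one hα t c t).mul_const M)
      fun s hs => mul_le_mul_of_nonneg_left (hM s hs) (Real.rpow_nonneg (by linarith [hs.2]) _)
  rw [← integral_add_adjacent_intervals hint_ac hint_ct, hvanish, zero_add]
  rwa [intervalIntegral.integral_mul_const, integral_sub_rpow_sub_one hα, mul_comm] at hbound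

section LinearVolterra

variable {α C a b : ℝ} {u : ℝ → ℝ}

lemma eq_zero_of_le_add_of_le_mul_integral (hα : 0 < α) (hC : 0 ≤ C) {δ : ℝ}
    (hCδ : C * (δ ^ α / α) < 1) (hu : ContinuousOn u (Icc a b))
    (hu0 : ∀ t ∈ Icc a b, 0 ≤ u t)
    (hle : ∀ t ∈ Icc a b, u t ≤ C * ∫ s in a..t, (t - s) ^ (α - 1) * u s)
    {c : ℝ} (hac : a ≤ c) (hc : ∀ t ∈ Icc a b, t ≤ c → u t = 0) :
    ∀ t ∈ Icc a b, t ≤ c + δ → u t = 0 := by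
  intro t ht htcδ
  rcases le_total t c with htc | hct
  · exact hc t ht htc
  set J := Icc c (min (c + δ) b)
  have hJ : J ⊆ Icc a b := Icc_subset_Icc hac (min_le_right _ _)
  have htJ : t ∈ J := ⟨hct, le_min htcδ ht.2⟩
  obtain ⟨t₀, ht₀J, ht₀max⟩ := isCompact_Icc.exists_isMaxOn ⟨t, htJ⟩ (hu.mono hJ)
  have hmax_le : u t₀ ≤ C * (δ ^ α / α) * u t₀ := by
    have hdist : t₀ - c ≤ δ := by linarith [ht₀J.2.trans (min_le_left _ _)]
    calc u t₀ ≤ C * ∫ s in a..t₀, (t₀ - s) ^ (α - 1) * u s := hle t₀ (hJ ht₀J)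
      _ ≤ C * (u t₀ * ((t₀ - c) ^ α / α)) := by
        refine mul_le_mul_of_nonneg_left (integral_sub_rpow_sub_one_mul_le hα hac ht₀J.1
          (hu.mono (Icc_subset_Icc_right (hJ ht₀J).2)) (fun s hs => ?_) (fun s hs => ?_)) hC
        · exact hc s ⟨hs.1, hs.2.trans (ht₀J.1.trans (hJ ht₀J).2)⟩ hs.2
        · exact ht₀max ⟨hs.1, hs.2.trans ht₀J.2⟩
      _ ≤ C * (u t₀ * (δ ^ α / α)) := by
        gcongr
        · exact hu0 t₀ (hJ ht₀J)
        · linarith [ht₀J.1]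
      _ = C * (δ ^ α / α) * u t₀ := by ring
  have hmax : u t₀ = 0 := by nlinarith [hu0 t₀ (hJ ht₀J)]
  exact le_antisymm (hmax ▸ ht₀max htJ) (hu0 t ht)

theorem eqOn_zero_of_le_mul_integral (hα : 0 < α) (hC : 0 ≤ C)
    (hu : ContinuousOn u (Icc a b)) (hu0 : ∀ t ∈ Icc a b, 0 ≤ u t)
    (hle : ∀ t ∈ Icc a b, u t ≤ C * ∫ s in a..t, (t - s) ^ (α - 1) * u s) :
    EqOn u 0 (Icc a b) := by
  set δ := (α / (C + 1)) ^ α⁻¹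
  have hδ : 0 < δ := by positivity
  have hCδ : C * (δ ^ α / α) < 1 := by
    rw [Real.rpow_inv_rpow (by positivity) hα.ne', div_div_cancel_left' hα.ne', ← div_eq_mul_inv,
      div_lt_one (by linarith)]
    linarith
  have hsteps : ∀ n : ℕ, ∀ t ∈ Icc a b, t ≤ a + n * δ → u t = 0 := by
    intro n
    induction n with
    | zero =>
      intro t ht hta
      obtain rfl : t = a := le_antisymm (by simpa using hta) ht.1
      exact le_antisymm (by simpa using hle t ht) (hu0 t ht)
    | succ n ih =>
      simpa [add_mul, add_assoc] using eq_zero_of_le_add_of_le_mul_integral hα hC hCδ hu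
        hu0 hle (le_add_of_nonneg_right (by positivity)) ih
  intro t ht
  obtain ⟨n, hn⟩ := exists_nat_ge ((t - a) / δ)
  exact hsteps n t ht (by linarith [(div_le_iff₀ hδ).mp hn])

end LinearVolterra

lemma rpow_le_rpow_sub_one_mul {x K lam : ℝ} (hx : 0 ≤ x) (hxK : x ≤ K) (hlam : 1 ≤ lam) :
    x ^ lam ≤ K ^ (lam - 1) * x := by
  calc x ^ lam = x ^ (lam - 1) * x := by
        rw [← Real.rpow_add_one' hx (by linarith), sub_add_cancel]
    _ ≤ K ^ (lam - 1) * x := by gcongr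

theorem eqOn_zero_of_le_integral_mul_rpow {α lam a b : ℝ} {h u : ℝ → ℝ} (hα : 0 < α)
    (hlam : 1 ≤ lam) (hh : ContinuousOn h (Icc a b)) (hu : ContinuousOn u (Icc a b))
    (hu0 : ∀ t ∈ Icc a b, 0 ≤ u t)
    (hle : ∀ t ∈ Icc a b,
      u t ≤ (Real.Gamma α)⁻¹ * ∫ s in a..t, (t - s) ^ (α - 1) * (h s * u s ^ lam)) :
    EqOn u 0 (Icc a b) := by
  obtain ⟨K, hK⟩ := isCompact_Icc.bddAbove_image hu
  obtain ⟨H, hH⟩ := isCompact_Icc.bddAbove_image hh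
  set L := max H 0 * max K 0 ^ (lam - 1)
  have hΓ : 0 < Real.Gamma α := Real.Gamma_pos_of_pos hα
  refine eqOn_zero_of_le_mul_integral hα (C := (Real.Gamma α)⁻¹ * L) (by positivity) hu hu0
    fun t ht => (hle t ht).trans ?_
  have hsub : uIcc a t ⊆ Icc a b := by rw [uIcc_of_le ht.1]; exact Icc_subset_Icc_right ht.2
  rw [mul_assoc, ← intervalIntegral.integral_const_mul L]
  refine mul_le_mul_of_nonneg_left (integral_mono_on ht.1 ?_ ?_ fun s hs => ?_) (by positivity)
  · exact intervalIntegrable_sub_rpow_sub_one_mul hα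
      ((hh.mul (hu.rpow_const fun _ _ => Or.inr (by linarith))).mono hsub)
  · exact (intervalIntegrable_sub_rpow_sub_one_mul hα (hu.mono hsub)).const_mul L
  have hs' : s ∈ Icc a b := ⟨hs.1, hs.2.trans ht.2⟩
  have hs_pow : 0 ≤ u s ^ lam := Real.rpow_nonneg (hu0 s hs') _
  calc (t - s) ^ (α - 1) * (h s * u s ^ lam)
      ≤ (t - s) ^ (α - 1) * (max H 0 * (max K 0 ^ (lam - 1) * u s)) := by
        gcongr
        · exact Real.rpow_nonneg (sub_nonneg.2 hs.2) _
        · exact (hH (mem_image_of_mem h hs')).trans (le_max_left _ _)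
        · exact rpow_le_rpow_sub_one_mul (hu0 s hs')
            ((hK (mem_image_of_mem u hs')).trans (le_max_left _ _)) hlam
    _ = L * ((t - s) ^ (α - 1) * u s) := by ring

theorem superlinear_with_coefficient_is_kamke_general
    (a b α lam : ℝ) (hα0 : 0 < α) (hlam : 1 ≤ lam)
    (h : ℝ → ℝ) (hh : ContinuousOn h (Set.Icc a b)) (hh0 : ∀ t ∈ Set.Icc a b, 0 ≤ h t) :
    (∀ u : ℝ → ℝ, ContinuousOn u (Set.Icc a b) → (∀ t ∈ Set.Icc a b, 0 ≤ u t) →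
      (∀ t ∈ Set.Icc a b,
        u t ≤ (Real.Gamma α)⁻¹ * ∫ s in a..t, ((t - s) ^ (α - 1) : ℝ) * (h s * u s ^ lam)) →
      ∀ t ∈ Set.Icc a b, u t = 0) ∧
    IsKamkeFunction α a b (fun t s => h t * s ^ lam) := by
  refine ⟨fun u hu hu0 hle t ht => eqOn_zero_of_le_integral_mul_rpow hα0 hlam hh hu hu0 hle ht,
    ?_, fun t ht s hs => mul_nonneg (hh0 t ht) (Real.rpow_nonneg hs _),
    fun t _ => by simp [Real.zero_rpow (by linarith : lam ≠ 0)],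
    fun v hv hv0 hle _ t ht => eqOn_zero_of_le_integral_mul_rpow hα0 hlam hh hv hv0 hle ht⟩
  exact (hh.comp continuousOn_fst fun p hp => hp.1).mul
    ((continuous_snd.rpow_const fun _ => Or.inr (by linarith)).continuousOn)

/-- For `0 < α < 1`, `λ ≥ 1` and `h : [a,b] → [0,∞)` continuous:
every continuous nonnegative `u : [a,b] → [0,∞)` satisfying
`u(t) ≤ (1/Γ(α)) ∫_a^t (t-s)^{α-1} h(s) u(s)^λ ds` vanishes identically on `[a,b]`;
consequently `w(t,s) = h(t)·s^λ` is a Kamke function of order `α` on `[a,b]`. -/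
theorem superlinear_with_coefficient_is_kamke
    (a b α lam : ℝ) (hab : a < b) (hα0 : 0 < α) (hα1 : α < 1) (hlam : 1 ≤ lam)
    (h : ℝ → ℝ) (hh : ContinuousOn h (Set.Icc a b)) (hh0 : ∀ t ∈ Set.Icc a b, 0 ≤ h t) :
    (∀ u : ℝ → ℝ, ContinuousOn u (Set.Icc a b) → (∀ t ∈ Set.Icc a b, 0 ≤ u t) →
      (∀ t ∈ Set.Icc a b,
        u t ≤ (Real.Gamma α)⁻¹ * ∫ s in a..t, ((t - s) ^ (α - 1) : ℝ) * (h s * u s ^ lam)) →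
      ∀ t ∈ Set.Icc a b, u t = 0) ∧
    IsKamkeFunction α a b (fun t s => h t * s ^ lam) :=
  superlinear_with_coefficient_is_kamke_general a b α lam hα0 hlam h hh hh0
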